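/- arXiv:2012.05943 — 3 statements merged into one kernel-verified Lean document; each statement's English description precedes it below -/
import Mathlib

section
/- Let P ∈ ℝ^{n×n} be symmetric with P_{ii} > 0, let d ∈ ℝⁿ, and let F(x) = (1/2)xᵀPx + dᵀx. Let x ∈ ℝⁿ with x ≥ 0 componentwise, fix i ∈ {1,…,n}, set x̂_i = max(0, x_i − (Px + d)_i / P_{ii}), and let x⁺ = x + (x̂_i − x_i)e_i. Then F(x⁺) − F(x) ≤ −(P_{ii}/2)‖x⁺ − x‖², where ‖·‖ is the Euclidean norm. In particular F(x⁺) ≤ F(x) and x⁺ ≥ 0. -/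
/-!
Along the coordinate direction `eᵢ` the objective is the one-dimensional quadratic
`F(x + t eᵢ) - F(x) = t gᵢ + (P_ii / 2) t²` with `g = Px + d`, and `x̂ᵢ` is its minimiser over
`x̂ᵢ ≥ 0`. The step `t = x̂ᵢ - xᵢ` therefore satisfies the variational inequality
`t (gᵢ + P_ii t) ≤ 0`, which is exactly the claimed decrease `-(P_ii / 2) t²`.
-/

open Matrix Finset

section CoordinateDirection

variable {ι R : Type*} [Fintype ι] [DecidableEq ι] [CommRing R]

theorem Matrix.IsSymm.dotProduct_mulVec_single_one {P : Matrix ι ι R} (hP : P.IsSymm)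
    (x : ι → R) (i : ι) : x ⬝ᵥ (P *ᵥ Pi.single i 1) = (P *ᵥ x) i := by
  rw [dotProduct_mulVec, dotProduct_single_one, ← vecMul_transpose, hP.eq]

theorem Matrix.IsSymm.add_smul_single_dotProduct_mulVec {P : Matrix ι ι R} (hP : P.IsSymm)
    (x : ι → R) (i : ι) (t : R) :
    (x + t • Pi.single i 1) ⬝ᵥ (P *ᵥ (x + t • Pi.single i 1))
      = x ⬝ᵥ (P *ᵥ x) + 2 * t * (P *ᵥ x) i + t ^ 2 * P i i := by
  simp only [mulVec_add, mulVec_smul, dotProduct_add, add_dotProduct, smul_dotProduct,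
    dotProduct_smul, smul_eq_mul, hP.dotProduct_mulVec_single_one, single_one_dotProduct]
  simp only [mulVec_single, MulOpposite.op_one, one_smul, Pi.add_apply, Pi.smul_apply, col_apply,
    smul_eq_mul]
  ring

theorem sum_sq_add_smul_single_sub (x : ι → R) (i : ι) (t : R) :
    ∑ j, ((x + t • Pi.single i 1 : ι → R) j - x j) ^ 2 = t ^ 2 := by
  simp [Pi.single_apply]

end CoordinateDirection

theorem add_smul_single_sub_eq_update {ι R : Type*} [DecidableEq ι] [Ring R] (x : ι → R) (i : ι)
    (s : R) : x + (s - x i) • Pi.single i 1 = Function.update x i s := by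
  ext j
  rcases eq_or_ne j i with rfl | h <;> simp [*]

theorem clipped_newton_step_mul_nonpos {a p : ℝ} (g : ℝ) (ha : 0 ≤ a) (hp : 0 < p) :
    (max 0 (a - g / p) - a) * (g + (max 0 (a - g / p) - a) * p) ≤ 0 := by
  rcases le_total 0 (a - g / p) with h | h
  · have hstationary : g + (a - g / p - a) * p = 0 := by field_simp; ring
    rw [max_eq_right h, hstationary, mul_zero]
  · have hslope : 0 ≤ g - a * p := by rw [sub_nonpos, le_div_iff₀ hp] at h; linarith
    rw [max_eq_left h]
    nlinarith

/-- sufficient decrease of the greedy CD coordinate update: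
`F(x⁺) − F(x) ≤ −(P_{ii}/2) ‖x⁺ − x‖²`, `F(x⁺) ≤ F(x)` and `x⁺ ≥ 0`. -/
theorem stmt1 (n : ℕ) (P : Matrix (Fin n) (Fin n) ℝ) (hP : P.IsSymm)
    (d : Fin n → ℝ) (F : (Fin n → ℝ) → ℝ)
    (hF : ∀ x, F x = (1 / 2) * (x ⬝ᵥ (P *ᵥ x)) + d ⬝ᵥ x)
    (x : Fin n → ℝ) (hx : 0 ≤ x) (i : Fin n) (hPii : 0 < P i i)
    (xhat : ℝ) (hxhat : xhat = max 0 (x i - (P *ᵥ x + d) i / P i i))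
    (xp : Fin n → ℝ) (hxp : xp = x + (xhat - x i) • (Pi.single i 1 : Fin n → ℝ)) :
    F xp - F x ≤ -(P i i / 2) * ∑ j, (xp j - x j) ^ 2 ∧ F xp ≤ F x ∧ 0 ≤ xp := by
  have hxp_nonneg : 0 ≤ xp := by
    rw [hxp, add_smul_single_sub_eq_update, le_update_iff]
    exact ⟨hxhat ▸ le_max_left _ _, fun j _ => hx j⟩
  have hstep : (xhat - x i) * ((P *ᵥ x + d) i + (xhat - x i) * P i i) ≤ 0 :=
    hxhat ▸ clipped_newton_step_mul_nonpos _ (hx i) hPii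
  subst hxp
  set t := xhat - x i
  have hdiff : F (x + t • Pi.single i 1) - F x = t * (P *ᵥ x + d) i + t ^ 2 / 2 * P i i := by
    rw [hF, hF, hP.add_smul_single_dotProduct_mulVec, dotProduct_add, dotProduct_smul,
      dotProduct_single_one, Pi.add_apply, smul_eq_mul]
    ring
  have hdecrease : F (x + t • Pi.single i 1) - F x ≤ -(P i i / 2) * t ^ 2 := by
    rw [hdiff]
    linear_combination hstep
  rw [sum_sq_add_smul_single_sub]
  exact ⟨hdecrease, by nlinarith [sq_nonneg t], hxp_nonneg⟩
end

section
/- Let P ∈ ℝ^{n×n} be symmetric positive semidefinite with P_{ii} > 0 for all i, let d ∈ ℝⁿ, and let F(x) = (1/2)xᵀPx + dᵀx. Let {x^k}_{k≥0} ⊂ ℝⁿ be a greedy CD sequence: x^0 ≥ 0, and for each k there is a coordinate i_k such that x^{k+1} = x^k + (x̂^k_{i_k} − x^k_{i_k})e_{i_k} where x̂^k_i = max(0, x^k_i − (Px^k + d)_i / P_{ii}), and the greedy selection holds: for every coordinate i ∈ {1,…,n}, F(x^{k+1}) ≤ F(x^k + (x̂^k_i − x^k_i)e_i). Suppose the lower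 level set L_0 = {x ∈ ℝⁿ : x ≥ 0, F(x) ≤ F(x^0)} is compact. Then F(x^k) converges as k → ∞ to F* = inf{F(x) : x ≥ 0}, the optimal value of the NQP. -/
/-! The objective values decrease, so the iterates stay in the compact level set and the values
converge to `F z` for a cluster point `z`. By continuity of `F` and of the coordinate updates, the
greedy rule passes to the limit: no coordinate update decreases `F` at `z`. For the one-dimensional
quadratic along each coordinate this is exactly the KKT condition `0 ≤ ∇F(z) ⊥ z ≥ 0`, and by
convexity a KKT point is a global minimizer over the nonnegative orthant. -/

open Matrix Filter Topology

section Descent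

variable {X ι : Type*} [TopologicalSpace X] [FirstCountableTopology X]

theorem exists_tendsto_of_antitone_le_update {K : Set X} (hK : IsCompact K) {f : X → ℝ}
    (hf : Continuous f) {T : ι → X → X} (hT : ∀ i, Continuous (T i)) {x : ℕ → X}
    (hxK : ∀ k, x k ∈ K) (hanti : Antitone (f ∘ x)) (hnext : ∀ k i, f (x (k + 1)) ≤ f (T i (x k))) :
    ∃ z ∈ K, Tendsto (f ∘ x) atTop (𝓝 (f z)) ∧ ∀ i, f z ≤ f (T i z) := by
  obtain ⟨z, hzK, φ, hφ, hxφ⟩ := hK.tendsto_subseq hxK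
  have hbdd : BddBelow (Set.range (f ∘ x)) := by
    obtain ⟨b, hb⟩ := (hK.image hf).bddBelow
    exact ⟨b, by rintro _ ⟨k, rfl⟩; exact hb ⟨x k, hxK k, rfl⟩⟩
  have hlim := tendsto_atTop_ciInf hanti hbdd
  have hfz : ⨅ k, (f ∘ x) k = f z :=
    tendsto_nhds_unique (hlim.comp hφ.tendsto_atTop) ((hf.tendsto z).comp hxφ)
  refine ⟨z, hzK, hfz ▸ hlim, fun i => ?_⟩
  have hle : ∀ j, f z ≤ f (T i (x (φ j))) := fun j =>
    hfz ▸ (ciInf_le hbdd (φ j + 1)).trans (hnext (φ j) i)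
  exact ge_of_tendsto (((hf.comp (hT i)).tendsto z).comp hxφ) (Eventually.of_forall hle)

end Descent

section Scalar

variable {p g a : ℝ}

theorem quadratic_at_max_zero_le (hp : 0 < p) {t : ℝ} (ht : 0 ≤ t) :
    g * (max 0 (a - g / p) - a) + p / 2 * (max 0 (a - g / p) - a) ^ 2
      ≤ g * (t - a) + p / 2 * (t - a) ^ 2 := by
  have hg : g = p * (g / p) := by field_simp
  rcases le_or_gt 0 (a - g / p) with h | h
  · rw [max_eq_right h]
    nlinarith [sq_nonneg (t - a + g / p), sq_nonneg (g / p)]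
  · rw [max_eq_left h.le]
    have hpa : p * a < g := by nlinarith
    nlinarith [mul_nonneg ht (by nlinarith : (0 : ℝ) ≤ g + p / 2 * t - p * a)]

theorem nonneg_and_mul_eq_zero_of_quadratic_at_max_zero_nonneg (hp : 0 < p) (ha : 0 ≤ a)
    (h : 0 ≤ g * (max 0 (a - g / p) - a) + p / 2 * (max 0 (a - g / p) - a) ^ 2) :
    0 ≤ g ∧ g * a = 0 := by
  have hg : g = p * (g / p) := by field_simp
  rcases le_or_gt 0 (a - g / p) with hm | hm
  · rw [max_eq_right hm] at h
    have : g = 0 := by nlinarith [sq_nonneg (g / p)]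
    simp [this]
  · rw [max_eq_left hm.le] at h
    have hpa : p * a < g := by nlinarith
    have ha0 : a = 0 := by nlinarith [mul_nonneg (mul_nonneg hp.le ha) ha]
    exact ⟨by nlinarith, by simp [ha0]⟩

end Scalar

section NQP

variable {ι : Type*} [Fintype ι] (P : Matrix ι ι ℝ) (d : ι → ℝ)

noncomputable def quadObj (x : ι → ℝ) : ℝ := 1 / 2 * (x ⬝ᵥ (P *ᵥ x)) + d ⬝ᵥ x

noncomputable def coordStep [DecidableEq ι] (x : ι → ℝ) (i : ι) : ι → ℝ :=
  x + (max 0 (x i - (P *ᵥ x + d) i / P i i) - x i) • Pi.single i 1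

theorem continuous_quadObj : Continuous (quadObj P d) := by
  unfold quadObj; simp only [dotProduct, mulVec]; fun_prop

variable [DecidableEq ι]

theorem continuous_coordStep (i : ι) : Continuous (coordStep P d · i) := by
  unfold coordStep; simp only [mulVec, dotProduct, Pi.add_apply]; fun_prop

variable {P d}

theorem coordStep_nonneg {x : ι → ℝ} (hx : 0 ≤ x) (i : ι) : 0 ≤ coordStep P d x i := by
  intro j
  rcases eq_or_ne j i with rfl | hj
  · simp [coordStep]
  · simpa [coordStep, Pi.single_eq_of_ne hj] using hx j

omit [DecidableEq ι] in
theorem Matrix.IsSymm.dotProduct_mulVec_comm (hP : P.IsSymm) (x y : ι → ℝ) :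
    x ⬝ᵥ (P *ᵥ y) = y ⬝ᵥ (P *ᵥ x) := by
  simpa only [hP.eq] using dotProduct_transpose_mulVec P x y

theorem quadObj_add_smul_single (hP : P.IsSymm) (x : ι → ℝ) (i : ι) (δ : ℝ) :
    quadObj P d (x + δ • Pi.single i 1) = quadObj P d x + (P *ᵥ x + d) i * δ + P i i / 2 * δ ^ 2 := by
  simp only [quadObj, mulVec_add, mulVec_smul, dotProduct_add, add_dotProduct, dotProduct_smul,
    smul_dotProduct, smul_eq_mul, hP.dotProduct_mulVec_comm x (Pi.single i 1), single_one_dotProduct,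
    dotProduct_single_one, Pi.add_apply]
  simp only [mulVec_single, MulOpposite.op_one, one_smul, col_apply]
  ring

omit [DecidableEq ι] in
theorem quadObj_add_dotProduct_sub_le (hP : P.PosSemidef) (x y : ι → ℝ) :
    quadObj P d x + (P *ᵥ x + d) ⬝ᵥ (y - x) ≤ quadObj P d y := by
  have hsymm := (isHermitian_iff_isSymm.mp hP.1).dotProduct_mulVec_comm y x
  have hnonneg : 0 ≤ (y - x) ⬝ᵥ (P *ᵥ (y - x)) := by
    simpa using hP.dotProduct_mulVec_nonneg (y - x)
  simp only [quadObj, mulVec_sub, dotProduct_sub, sub_dotProduct, add_dotProduct,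
    dotProduct_comm (P *ᵥ x)] at hnonneg ⊢
  linarith

theorem quadObj_coordStep_le (hP : P.IsSymm) {i : ι} (hPi : 0 < P i i) (x : ι → ℝ) {t : ℝ}
    (ht : 0 ≤ t) : quadObj P d (coordStep P d x i) ≤ quadObj P d (x + (t - x i) • Pi.single i 1) := by
  rw [coordStep, quadObj_add_smul_single hP, quadObj_add_smul_single hP]
  linarith [quadratic_at_max_zero_le (g := (P *ᵥ x + d) i) (a := x i) hPi ht]

theorem kkt_of_forall_quadObj_le_coordStep (hP : P.IsSymm) (hPdiag : ∀ i, 0 < P i i)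
    {z : ι → ℝ} (hz : 0 ≤ z) (h : ∀ i, quadObj P d z ≤ quadObj P d (coordStep P d z i)) (i : ι) :
    0 ≤ (P *ᵥ z + d) i ∧ (P *ᵥ z + d) i * z i = 0 := by
  have hi := h i
  rw [coordStep, quadObj_add_smul_single hP] at hi
  exact nonneg_and_mul_eq_zero_of_quadratic_at_max_zero_nonneg (hPdiag i) (hz i) (by linarith)

omit [DecidableEq ι] in
theorem quadObj_le_of_kkt (hP : P.PosSemidef) {z : ι → ℝ}
    (hkkt : ∀ i, 0 ≤ (P *ᵥ z + d) i ∧ (P *ᵥ z + d) i * z i = 0) {y : ι → ℝ} (hy : 0 ≤ y) :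
    quadObj P d z ≤ quadObj P d y := by
  have hcompl : (P *ᵥ z + d) ⬝ᵥ z = 0 := Finset.sum_eq_zero fun i _ => (hkkt i).2
  have hdual : 0 ≤ (P *ᵥ z + d) ⬝ᵥ y := Finset.sum_nonneg fun i _ => mul_nonneg (hkkt i).1 (hy i)
  have := quadObj_add_dotProduct_sub_le (d := d) hP z y
  rw [dotProduct_sub, hcompl] at this
  linarith

theorem isLeast_quadObj_of_forall_le_coordStep (hP : P.PosSemidef) (hPdiag : ∀ i, 0 < P i i)
    {z : ι → ℝ} (hz : 0 ≤ z) (h : ∀ i, quadObj P d z ≤ quadObj P d (coordStep P d z i)) :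
    IsLeast (quadObj P d '' {y | 0 ≤ y}) (quadObj P d z) := by
  have hkkt := kkt_of_forall_quadObj_le_coordStep (isHermitian_iff_isSymm.mp hP.1) hPdiag hz h
  exact ⟨⟨z, hz, rfl⟩, by rintro _ ⟨y, hy, rfl⟩; exact quadObj_le_of_kkt hP hkkt hy⟩

end NQP

/-- convergence of the objective values of the greedy CD method on the NQP
`min { F(x) = (1/2) xᵀ P x + dᵀ x : x ≥ 0 }` to the optimal value `F* = inf { F(x) : x ≥ 0 }`,
assuming the lower level set `{x ≥ 0 : F(x) ≤ F(x⁰)}` is compact. -/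
theorem stmt3 (n : ℕ) (P : Matrix (Fin n) (Fin n) ℝ) (hP : P.PosSemidef)
    (hPdiag : ∀ i, 0 < P i i)
    (d : Fin n → ℝ) (F : (Fin n → ℝ) → ℝ)
    (hF : ∀ x, F x = (1 / 2) * (x ⬝ᵥ (P *ᵥ x)) + d ⬝ᵥ x)
    (xhat : (Fin n → ℝ) → Fin n → ℝ)
    (hxhat : ∀ x i, xhat x i = max 0 (x i - (P *ᵥ x + d) i / P i i))
    (x : ℕ → Fin n → ℝ) (hx0 : 0 ≤ x 0)
    (ik : ℕ → Fin n)
    (hupd : ∀ k, x (k + 1) =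
      x k + (xhat (x k) (ik k) - x k (ik k)) • (Pi.single (ik k) 1 : Fin n → ℝ))
    (hgreedy : ∀ k, ∀ i : Fin n,
      F (x (k + 1)) ≤ F (x k + (xhat (x k) i - x k i) • (Pi.single i 1 : Fin n → ℝ)))
    (hcompact : IsCompact {y : Fin n → ℝ | 0 ≤ y ∧ F y ≤ F (x 0)}) :
    Tendsto (fun k => F (x k)) atTop (𝓝 (sInf (F '' {y : Fin n → ℝ | 0 ≤ y}))) := by
  obtain rfl : F = quadObj P d := funext hF
  have hstep : ∀ y i, y + (xhat y i - y i) • Pi.single i 1 = coordStep P d y i := by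
    intro y i; rw [hxhat]; rfl
  simp only [hstep] at hupd hgreedy
  have hnonneg : ∀ k, 0 ≤ x k := Nat.rec hx0 fun k ih => hupd k ▸ coordStep_nonneg ih (ik k)
  have hanti : Antitone (quadObj P d ∘ x) := antitone_nat_of_succ_le fun k => by
    simpa [hupd k] using
      quadObj_coordStep_le (isHermitian_iff_isSymm.mp hP.1) (hPdiag (ik k)) (x k) (hnonneg k (ik k))
  obtain ⟨z, ⟨hz, -⟩, hlim, hzmin⟩ := exists_tendsto_of_antitone_le_update hcompact
    (continuous_quadObj P d) (continuous_coordStep P d) (fun k => ⟨hnonneg k, hanti k.zero_le⟩)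
    hanti hgreedy
  rwa [(isLeast_quadObj_of_forall_le_coordStep hP hPdiag hz hzmin).csInf_eq]
end

section
/- Let P ∈ ℝ^{n×n} be symmetric positive semidefinite with P_{ii} > 0 for all i, let d ∈ ℝⁿ, and let F(x) = (1/2)xᵀPx + dᵀx. Let {x^k}_{k≥0} be a greedy CD sequence as in Theorem 1: x^0 ≥ 0; for each k, x^{k+1} = x^k + (x̂^k_{i_k} − x^k_{i_k})e_{i_k} with x̂^k_i = max(0, x^k_i − (Px^k + d)_i / P_{ii}) and F(x^{k+1}) ≤ F(x^k + (x̂^k_i − x^k_i)e_i) for all i; and suppose the level set {x ≥ 0 : F(x) ≤ F(x^0)} is compact. Then every cluster point x̄ of the sequence {x^k} satisfies x̄ ≥ 0 and F(x̄) ≤ F(x) for all x ≥ 0, i.e., x̄ is a global minimizer of F over the nonnegative orthant. -/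
open Matrix Filter Topology

/-!
Each greedy step does at least as well as any single-coordinate step, and from a nonnegative
point the step `s` at coordinate `i` lowers `F` by at least `P i i / 2 · s²`. Hence `F (x k)` is
antitone; it converges to `F x̄` because a subsequence does, so the coordinate steps at `x (φ k)`
vanish and, by continuity, `x̄` is a fixed point of every coordinate update. Such a fixed point
satisfies the KKT conditions `∇F(x̄) ≥ 0`, `∇F(x̄) ⊙ x̄ = 0`, which for convex `F` make `x̄` a
minimizer over the orthant.
-/
section Scalar

variable {x g p : ℝ}

theorem max_zero_sub_div_sub_mul_add_sq_nonpos (hx : 0 ≤ x) (hp : 0 < p) :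
    (max 0 (x - g / p) - x) * g + p * (max 0 (x - g / p) - x) ^ 2 ≤ 0 := by
  have hgp : g / p * p = g := div_mul_cancel₀ g hp.ne'
  rcases le_or_gt (x - g / p) 0 with hc | hc
  · have hpx : x * p ≤ g := (le_div_iff₀ hp).mp (by linarith)
    rw [max_eq_left hc]
    nlinarith [mul_nonneg hx (sub_nonneg.2 hpx)]
  · rw [max_eq_right hc.le]
    nlinarith

theorem nonneg_and_mul_eq_zero_of_max_zero_sub_div_eq (hp : 0 < p)
    (h : max 0 (x - g / p) = x) : 0 ≤ g ∧ g * x = 0 := by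
  have hgp : g / p * p = g := div_mul_cancel₀ g hp.ne'
  rcases le_or_gt (x - g / p) 0 with hc | hc
  · rw [max_eq_left hc] at h
    subst h
    exact ⟨by nlinarith, mul_zero g⟩
  · rw [max_eq_right hc.le] at h
    have hgp0 : g / p = 0 := by linarith
    rw [hgp0, zero_mul] at hgp
    exact ⟨hgp.le, by rw [← hgp, zero_mul]⟩

end Scalar

theorem add_sub_smul_single_eq_update {ι R : Type*} [DecidableEq ι] [Ring R] (y : ι → R)
    (i : ι) (a : R) : y + (a - y i) • Pi.single i 1 = Function.update y i a := by
  ext j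
  rcases eq_or_ne j i with rfl | hj
  · simp
  · simp [hj]

variable {ι : Type*} [Fintype ι]

noncomputable def quadObjective (P : Matrix ι ι ℝ) (d x : ι → ℝ) : ℝ :=
  1 / 2 * (x ⬝ᵥ (P *ᵥ x)) + d ⬝ᵥ x

noncomputable def coordUpdate (P : Matrix ι ι ℝ) (d x : ι → ℝ) (i : ι) : ℝ :=
  max 0 (x i - (P *ᵥ x + d) i / P i i)

section

variable (P : Matrix ι ι ℝ) (d : ι → ℝ)

theorem continuous_quadObjective : Continuous (quadObjective P d) := by
  unfold quadObjective
  simp only [dotProduct, mulVec]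
  fun_prop

theorem coordUpdate_nonneg (x : ι → ℝ) (i : ι) : 0 ≤ coordUpdate P d x i := le_max_left _ _

theorem continuous_coordUpdate (i : ι) : Continuous fun x => coordUpdate P d x i := by
  unfold coordUpdate
  simp only [mulVec, dotProduct, Pi.add_apply]
  fun_prop

end

variable {P : Matrix ι ι ℝ} {d : ι → ℝ}

theorem quadObjective_add (hP : P.IsSymm) (y h : ι → ℝ) :
    quadObjective P d (y + h) =
      quadObjective P d y + (P *ᵥ y + d) ⬝ᵥ h + 1 / 2 * (h ⬝ᵥ (P *ᵥ h)) := by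
  have hyh : y ⬝ᵥ (P *ᵥ h) = h ⬝ᵥ (P *ᵥ y) := by
    simpa only [hP.eq] using dotProduct_transpose_mulVec P y h
  simp only [quadObjective, mulVec_add, dotProduct_add, add_dotProduct, hyh,
    dotProduct_comm (P *ᵥ y) h, dotProduct_comm d h]
  ring

theorem quadObjective_add_smul_single [DecidableEq ι] (hP : P.IsSymm) (y : ι → ℝ) (i : ι)
    (t : ℝ) : quadObjective P d (y + t • Pi.single i 1) =
      quadObjective P d y + t * (P *ᵥ y + d) i + P i i / 2 * t ^ 2 := by
  rw [quadObjective_add hP]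
  simp only [mulVec_smul, dotProduct_smul, smul_dotProduct, dotProduct_single_one,
    single_one_dotProduct, mulVec_single_one, col_apply, smul_eq_mul]
  ring

theorem quadObjective_add_coordStep_le [DecidableEq ι] (hP : P.IsSymm) {i : ι}
    (hPii : 0 < P i i) {y : ι → ℝ} (hy : 0 ≤ y) :
    quadObjective P d (y + (coordUpdate P d y i - y i) • Pi.single i 1)
      + P i i / 2 * (coordUpdate P d y i - y i) ^ 2 ≤ quadObjective P d y := by
  have hstep := max_zero_sub_div_sub_mul_add_sq_nonpos (g := (P *ᵥ y + d) i) (hy i) hPii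
  rw [quadObjective_add_smul_single hP, coordUpdate]
  nlinarith

theorem quadObjective_le_of_coordUpdate_eq_self (hP : P.PosSemidef) (hPdiag : ∀ i, 0 < P i i)
    {x : ι → ℝ} (hfix : ∀ i, coordUpdate P d x i = x i) {z : ι → ℝ} (hz : 0 ≤ z) :
    quadObjective P d x ≤ quadObjective P d z := by
  set g := P *ᵥ x + d
  have hkkt (i : ι) : 0 ≤ g i ∧ g i * x i = 0 :=
    nonneg_and_mul_eq_zero_of_max_zero_sub_div_eq (hPdiag i) (hfix i)
  have hgx : g ⬝ᵥ x = 0 := Finset.sum_eq_zero fun i _ => (hkkt i).2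
  have hgz : 0 ≤ g ⬝ᵥ z := Finset.sum_nonneg fun i _ => mul_nonneg (hkkt i).1 (hz i)
  have hquad := hP.dotProduct_mulVec_nonneg (z - x)
  have hexp := quadObjective_add (d := d) (isHermitian_iff_isSymm.mp hP.isHermitian) x (z - x)
  rw [add_sub_cancel, dotProduct_sub, hgx] at hexp
  simp only [star_trivial] at hquad
  linarith

theorem coordUpdate_eq_self_of_tendsto {i : ι} (hPii : 0 < P i i) {x : ℕ → ι → ℝ}
    (hdesc : ∀ k, quadObjective P d (x (k + 1)) + P i i / 2 * (coordUpdate P d (x k) i - x k i) ^ 2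
      ≤ quadObjective P d (x k))
    {L : ℝ} (hconv : Tendsto (fun k => quadObjective P d (x k)) atTop (𝓝 L))
    {φ : ℕ → ℕ} (hφ : Tendsto φ atTop atTop) {xbar : ι → ℝ}
    (hlim : Tendsto (x ∘ φ) atTop (𝓝 xbar)) : coordUpdate P d xbar i = xbar i := by
  have hgap : Tendsto (fun k => quadObjective P d (x k) - quadObjective P d (x (k + 1)))
      atTop (𝓝 0) := by
    simpa using hconv.sub (hconv.comp (tendsto_add_atTop_nat 1))
  have hstep : Tendsto (fun k => P i i / 2 * (coordUpdate P d (x (φ k)) i - x (φ k) i) ^ 2)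
      atTop (𝓝 (P i i / 2 * (coordUpdate P d xbar i - xbar i) ^ 2)) :=
    ((((continuous_coordUpdate P d i).sub (continuous_apply i)).pow 2).const_mul
      _).continuousAt.tendsto.comp hlim
  have hle : P i i / 2 * (coordUpdate P d xbar i - xbar i) ^ 2 ≤ 0 :=
    le_of_tendsto_of_tendsto' hstep (hgap.comp hφ) fun k => by
      simp only [Function.comp_apply]
      linarith [hdesc (φ k)]
  have hsq : (coordUpdate P d xbar i - xbar i) ^ 2 = 0 :=
    le_antisymm (nonpos_of_mul_nonpos_right hle (by positivity)) (sq_nonneg _)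
  exact sub_eq_zero.mp (pow_eq_zero_iff two_ne_zero |>.mp hsq)

theorem stmt4_general (n : ℕ) (P : Matrix (Fin n) (Fin n) ℝ) (hP : P.PosSemidef)
    (hPdiag : ∀ i, 0 < P i i)
    (d : Fin n → ℝ) (F : (Fin n → ℝ) → ℝ)
    (hF : ∀ x, F x = (1 / 2) * (x ⬝ᵥ (P *ᵥ x)) + d ⬝ᵥ x)
    (xhat : (Fin n → ℝ) → Fin n → ℝ)
    (hxhat : ∀ x i, xhat x i = max 0 (x i - (P *ᵥ x + d) i / P i i))
    (x : ℕ → Fin n → ℝ) (hx0 : 0 ≤ x 0)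
    (ik : ℕ → Fin n)
    (hupd : ∀ k, x (k + 1) =
      x k + (xhat (x k) (ik k) - x k (ik k)) • (Pi.single (ik k) 1 : Fin n → ℝ))
    (hgreedy : ∀ k, ∀ i : Fin n,
      F (x (k + 1)) ≤ F (x k + (xhat (x k) i - x k i) • (Pi.single i 1 : Fin n → ℝ))) :
    ∀ xbar : Fin n → ℝ,
      (∃ φ : ℕ → ℕ, StrictMono φ ∧ Tendsto (fun k => x (φ k)) atTop (𝓝 xbar)) →
      0 ≤ xbar ∧ ∀ z : Fin n → ℝ, 0 ≤ z → F xbar ≤ F z := by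
  obtain rfl : F = quadObjective P d := funext hF
  obtain rfl : xhat = coordUpdate P d := funext fun y => funext (hxhat y)
  rintro xbar ⟨φ, hφ, hlim⟩
  have hnonneg (k : ℕ) : 0 ≤ x k := by
    induction k with
    | zero => exact hx0
    | succ k ih =>
      rw [hupd k, add_sub_smul_single_eq_update, le_update_iff]
      exact ⟨coordUpdate_nonneg P d _ _, fun j _ => ih j⟩
  have hdesc (k : ℕ) (i : Fin n) : quadObjective P d (x (k + 1))
      + P i i / 2 * (coordUpdate P d (x k) i - x k i) ^ 2 ≤ quadObjective P d (x k) :=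
    (add_le_add_left (hgreedy k i) _).trans
    (quadObjective_add_coordStep_le (isHermitian_iff_isSymm.mp hP.isHermitian) (hPdiag i)
      (hnonneg k))
  have hanti : Antitone fun k => quadObjective P d (x k) := antitone_nat_of_succ_le fun k =>
    le_of_add_le_of_nonneg_left (hdesc k (ik k)) (by have := hPdiag (ik k); positivity)
  have hconv : Tendsto (fun k => quadObjective P d (x k)) atTop (𝓝 (quadObjective P d xbar)) :=
    (tendsto_iff_tendsto_subseq_of_antitone hanti hφ.tendsto_atTop).2
      (((continuous_quadObjective P d).tendsto xbar).comp hlim)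
  have hfix (i : Fin n) : coordUpdate P d xbar i = xbar i :=
    coordUpdate_eq_self_of_tendsto (hPdiag i) (hdesc · i) hconv hφ.tendsto_atTop hlim
  exact ⟨fun i => hfix i ▸ coordUpdate_nonneg P d xbar i,
    fun z hz => quadObjective_le_of_coordUpdate_eq_self hP hPdiag hfix hz⟩

/-- every cluster point of the greedy CD sequence on the NQP
`min { F(x) = (1/2) xᵀ P x + dᵀ x : x ≥ 0 }` is a global minimizer of `F` over the
nonnegative orthant, assuming the lower level set `{x ≥ 0 : F(x) ≤ F(x⁰)}` is compact. -/
theorem stmt4 (n : ℕ) (P : Matrix (Fin n) (Fin n) ℝ) (hP : P.PosSemidef)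
    (hPdiag : ∀ i, 0 < P i i)
    (d : Fin n → ℝ) (F : (Fin n → ℝ) → ℝ)
    (hF : ∀ x, F x = (1 / 2) * (x ⬝ᵥ (P *ᵥ x)) + d ⬝ᵥ x)
    (xhat : (Fin n → ℝ) → Fin n → ℝ)
    (hxhat : ∀ x i, xhat x i = max 0 (x i - (P *ᵥ x + d) i / P i i))
    (x : ℕ → Fin n → ℝ) (hx0 : 0 ≤ x 0)
    (ik : ℕ → Fin n)
    (hupd : ∀ k, x (k + 1) =
      x k + (xhat (x k) (ik k) - x k (ik k)) • (Pi.single (ik k) 1 : Fin n → ℝ))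
    (hgreedy : ∀ k, ∀ i : Fin n,
      F (x (k + 1)) ≤ F (x k + (xhat (x k) i - x k i) • (Pi.single i 1 : Fin n → ℝ)))
    (hcompact : IsCompact {y : Fin n → ℝ | 0 ≤ y ∧ F y ≤ F (x 0)}) :
    ∀ xbar : Fin n → ℝ,
      (∃ φ : ℕ → ℕ, StrictMono φ ∧ Tendsto (fun k => x (φ k)) atTop (𝓝 xbar)) →
      0 ≤ xbar ∧ ∀ z : Fin n → ℝ, 0 ≤ z → F xbar ≤ F z :=
  stmt4_general n P hP hPdiag d F hF xhat hxhat x hx0 ik hupd hgreedy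
end
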